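/- Performance–difference lemma: in a discounted MDP with discount γ ∈ [0,1) and bounded reward, for any two policies π, π′ and initial distribution ρ, J(π′) - J(π) = (1/(1-γ)) · E_{s ∼ d^{π′}_ρ, a ∼ π′(·|s)}[A^π(s,a)], where d^{π′}_ρ(s) = (1-γ)·Σ_{t≥0} γᵗ·Pr(s_t = s | s₀ ∼ ρ, π′) is the normalized discounted occupancy and A^π = Q^π - V^π. -/

import Mathlib

open Finset

/-- Performance–difference lemma in a finite discounted MDP: for policies `π, π'`, value
functions satisfying the Bellman evaluation equations, and the normalized discounted occupancy
`d^{π'}_ρ(s) = (1-γ)·Σ_t γᵗ·Pr(s_t = s)` of `π'`,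
`J(π') - J(π) = (1/(1-γ))·E_{s∼d^{π'}_ρ, a∼π'(·|s)}[A^π(s,a)]`. -/
theorem performance_difference_lemma
    {S A : Type*} [Fintype S] [Fintype A]
    (γ : ℝ) (hγ0 : 0 ≤ γ) (hγ1 : γ < 1)
    (P : S → A → S → ℝ)
    (hPnn : ∀ s a s', 0 ≤ P s a s') (hPsum : ∀ s a, ∑ s', P s a s' = 1)
    (r : S → A → ℝ)
    (π π' : S → A → ℝ)
    (hπnn : ∀ s a, 0 ≤ π s a) (hπsum : ∀ s, ∑ a, π s a = 1)
    (hπ'nn : ∀ s a, 0 ≤ π' s a) (hπ'sum : ∀ s, ∑ a, π' s a = 1)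
    (ρ : S → ℝ) (hρnn : ∀ s, 0 ≤ ρ s) (hρsum : ∑ s, ρ s = 1)
    (Vπ Vπ' : S → ℝ)
    (hV : ∀ s, Vπ s = ∑ a, π s a * (r s a + γ * ∑ s', P s a s' * Vπ s'))
    (hV' : ∀ s, Vπ' s = ∑ a, π' s a * (r s a + γ * ∑ s', P s a s' * Vπ' s'))
    (stateDist : ℕ → S → ℝ)
    (hμ0 : ∀ s, stateDist 0 s = ρ s)
    (hμsucc : ∀ t s', stateDist (t + 1) s' = ∑ s, ∑ a, stateDist t s * π' s a * P s a s')
    (d : S → ℝ) (hd : ∀ s, d s = (1 - γ) * ∑' t : ℕ, γ ^ t * stateDist t s) :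
    (∑ s, ρ s * Vπ' s) - (∑ s, ρ s * Vπ s)
      = (1 / (1 - γ)) *
          ∑ s, d s * ∑ a, π' s a *
            ((r s a + γ * ∑ s', P s a s' * Vπ s') - Vπ s) := by
  have h1γ : (1 : ℝ) - γ ≠ 0 := by linarith
  set μ := stateDist with hμdef
  set δ : S → ℝ := fun s => ∑ a, π' s a *
      ((r s a + γ * ∑ s', P s a s' * Vπ s') - Vπ s) with hδ
  set f : ℕ → ℝ := fun t => ∑ s, μ t s * (Vπ' s - Vπ s) with hf
  -- μ t is a probability distribution
  have hμprop : ∀ t, (∀ s, 0 ≤ μ t s) ∧ (∑ s, μ t s = 1) := by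
    intro t
    induction t with
    | zero =>
      refine ⟨fun s => ?_, ?_⟩
      · rw [hμ0]; exact hρnn s
      · simp only [hμ0]; exact hρsum
    | succ t ih =>
      refine ⟨fun s' => ?_, ?_⟩
      · rw [hμsucc]
        exact Finset.sum_nonneg fun s _ => Finset.sum_nonneg fun a _ =>
          mul_nonneg (mul_nonneg (ih.1 s) (hπ'nn s a)) (hPnn s a s')
      · simp only [hμsucc]
        rw [Finset.sum_comm]
        have : ∀ s, ∑ s', ∑ a, μ t s * π' s a * P s a s' = μ t s := by
          intro s
          rw [Finset.sum_comm]
          calc ∑ a, ∑ s', μ t s * π' s a * P s a s'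
              = ∑ a, μ t s * π' s a * ∑ s', P s a s' := by
                refine Finset.sum_congr rfl fun a _ => ?_
                rw [Finset.mul_sum]
            _ = μ t s := by
                simp only [hPsum, mul_one, ← Finset.mul_sum, hπ'sum]
        simp only [this]
        exact ih.2
  have hμnn : ∀ t s, 0 ≤ μ t s := fun t => (hμprop t).1
  have hμle1 : ∀ t s, μ t s ≤ 1 := by
    intro t s
    rw [← (hμprop t).2]
    exact Finset.single_le_sum (fun s _ => hμnn t s) (Finset.mem_univ s)
  -- transfer lemma
  have key : ∀ (t : ℕ) (W : S → ℝ),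
      ∑ s, μ t s * ∑ a, π' s a * (γ * ∑ s', P s a s' * W s')
        = γ * ∑ s', μ (t + 1) s' * W s' := by
    intro t W
    have hrhs : γ * ∑ s', μ (t + 1) s' * W s'
        = ∑ s, ∑ a, ∑ s', γ * (μ t s * π' s a * P s a s' * W s') := by
      simp only [hμsucc, Finset.mul_sum, Finset.sum_mul]
      rw [Finset.sum_comm]
      refine Finset.sum_congr rfl fun s _ => ?_
      rw [Finset.sum_comm]
    rw [hrhs]
    refine Finset.sum_congr rfl fun s _ => ?_
    rw [Finset.mul_sum]
    refine Finset.sum_congr rfl fun a _ => ?_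
    rw [Finset.mul_sum, Finset.mul_sum, Finset.mul_sum]
    refine Finset.sum_congr rfl fun s' _ => ?_
    ring
  -- telescoping step
  have step : ∀ t, ∑ s, μ t s * δ s = f t - γ * f (t + 1) := by
    intro t
    have hδexp : ∀ s, δ s = (∑ a, π' s a * r s a)
        + (∑ a, π' s a * (γ * ∑ s', P s a s' * Vπ s')) - Vπ s := by
      intro s
      rw [hδ]
      simp only [mul_sub, mul_add, Finset.sum_sub_distrib, Finset.sum_add_distrib,
        ← Finset.sum_mul, hπ'sum, one_mul]
    have hA : ∑ s, μ t s * δ s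
        = (∑ s, μ t s * ∑ a, π' s a * r s a)
          + γ * (∑ s', μ (t + 1) s' * Vπ s') - ∑ s, μ t s * Vπ s := by
      rw [← key t Vπ]
      simp only [hδexp, mul_sub, mul_add, Finset.sum_sub_distrib, Finset.sum_add_distrib]
    have hB : ∑ s, μ t s * Vπ' s
        = (∑ s, μ t s * ∑ a, π' s a * r s a)
          + γ * (∑ s', μ (t + 1) s' * Vπ' s') := by
      rw [← key t Vπ']
      calc ∑ s, μ t s * Vπ' s
          = ∑ s, μ t s * ∑ a, (π' s a * r s a + π' s a * (γ * ∑ s', P s a s' * Vπ' s')) := by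
            refine Finset.sum_congr rfl fun s _ => ?_
            rw [hV' s]
            congr 1
            exact Finset.sum_congr rfl fun a _ => by ring
        _ = _ := by
            simp only [Finset.sum_add_distrib, mul_add, Finset.sum_add_distrib]
    have hfB : ∀ t, f t = ∑ s, μ t s * Vπ' s - ∑ s, μ t s * Vπ s := by
      intro t
      simp only [hf, mul_sub, Finset.sum_sub_distrib]
    rw [hA, hfB, hfB, hB]
    ring
  -- bounds and summability
  set C : ℝ := ∑ s, |Vπ' s - Vπ s| with hC
  have hCnn : 0 ≤ C := Finset.sum_nonneg fun s _ => abs_nonneg _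
  have hfbound : ∀ t, |f t| ≤ C := by
    intro t
    calc |f t| ≤ ∑ s, |μ t s * (Vπ' s - Vπ s)| := Finset.abs_sum_le_sum_abs _ _
      _ ≤ C := by
        refine Finset.sum_le_sum fun s _ => ?_
        rw [abs_mul, abs_of_nonneg (hμnn t s)]
        calc μ t s * |Vπ' s - Vπ s| ≤ 1 * |Vπ' s - Vπ s| := by
              exact mul_le_mul_of_nonneg_right (hμle1 t s) (abs_nonneg _)
          _ = |Vπ' s - Vπ s| := one_mul _
  have hsummand : ∀ s, Summable (fun t => γ ^ t * μ t s * δ s) := by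
    intro s
    refine Summable.of_norm_bounded (g := fun t => |δ s| * γ ^ t)
      ((summable_geometric_of_lt_one hγ0 hγ1).mul_left _) fun t => ?_
    rw [Real.norm_eq_abs, abs_mul, abs_mul, abs_of_nonneg (pow_nonneg hγ0 t),
      abs_of_nonneg (hμnn t s)]
    calc γ ^ t * μ t s * |δ s| ≤ γ ^ t * 1 * |δ s| := by
          refine mul_le_mul_of_nonneg_right ?_ (abs_nonneg _)
          exact mul_le_mul_of_nonneg_left (hμle1 t s) (pow_nonneg hγ0 t)
      _ = |δ s| * γ ^ t := by ring
  set X : ℕ → ℝ := fun t => γ ^ t * ∑ s, μ t s * δ s with hX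
  have hXsum : Summable X := by
    set D : ℝ := ∑ s, |δ s| with hD
    refine Summable.of_norm_bounded (g := fun t => D * γ ^ t)
      ((summable_geometric_of_lt_one hγ0 hγ1).mul_left _) fun t => ?_
    rw [Real.norm_eq_abs, hX, abs_mul, abs_of_nonneg (pow_nonneg hγ0 t)]
    rw [mul_comm]
    refine mul_le_mul_of_nonneg_right ?_ (pow_nonneg hγ0 t)
    calc |∑ s, μ t s * δ s| ≤ ∑ s, |μ t s * δ s| := Finset.abs_sum_le_sum_abs _ _
      _ ≤ D := by
        refine Finset.sum_le_sum fun s _ => ?_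
        rw [abs_mul, abs_of_nonneg (hμnn t s)]
        calc μ t s * |δ s| ≤ 1 * |δ s| :=
              mul_le_mul_of_nonneg_right (hμle1 t s) (abs_nonneg _)
          _ = |δ s| := one_mul _
  -- telescoping sum
  have hXhas : HasSum X (f 0) := by
    rw [hXsum.hasSum_iff_tendsto_nat]
    have hpartial : ∀ n, ∑ i ∈ Finset.range n, X i = f 0 - γ ^ n * f n := by
      intro n
      have : ∀ i, X i = γ ^ i * f i - γ ^ (i + 1) * f (i + 1) := by
        intro i
        show γ ^ i * ∑ s, μ i s * δ s = γ ^ i * f i - γ ^ (i + 1) * f (i + 1)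
        rw [step]
        ring
      simp only [this]
      rw [Finset.sum_range_sub' (fun i => γ ^ i * f i)]
      simp
    simp only [hpartial]
    have hzero : Filter.Tendsto (fun n => γ ^ n * f n) Filter.atTop (nhds 0) := by
      have hbd : ∀ n, ‖γ ^ n * f n‖ ≤ C * γ ^ n := by
        intro n
        rw [Real.norm_eq_abs, abs_mul, abs_of_nonneg (pow_nonneg hγ0 n), mul_comm]
        exact mul_le_mul_of_nonneg_right (hfbound n) (pow_nonneg hγ0 n)
      have hg : Filter.Tendsto (fun n : ℕ => C * γ ^ n) Filter.atTop (nhds 0) := by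
        simpa using (tendsto_pow_atTop_nhds_zero_of_lt_one hγ0 hγ1).const_mul C
      exact squeeze_zero_norm hbd hg
    have := Filter.Tendsto.sub (tendsto_const_nhds (x := f 0)) hzero
    simpa using this
  -- conclude
  have hLHS : (∑ s, ρ s * Vπ' s) - (∑ s, ρ s * Vπ s) = f 0 := by
    simp only [hf, hμ0, mul_sub, Finset.sum_sub_distrib]
  have hRHS : ∑ s, d s * δ s = (1 - γ) * f 0 := by
    have : ∑ s, d s * δ s = (1 - γ) * ∑ s, ∑' t : ℕ, γ ^ t * μ t s * δ s := by
      rw [Finset.mul_sum]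
      refine Finset.sum_congr rfl fun s _ => ?_
      rw [hd s, mul_assoc]
      congr 1
      rw [← tsum_mul_right]
    rw [this]
    congr 1
    rw [← Summable.tsum_finsetSum fun s _ => hsummand s]
    rw [← hXhas.tsum_eq]
    refine tsum_congr fun t => ?_
    show ∑ s, γ ^ t * μ t s * δ s = γ ^ t * ∑ s, μ t s * δ s
    rw [Finset.mul_sum]
    exact Finset.sum_congr rfl fun s _ => by ring
  rw [hLHS]
  rw [show (∑ s, d s * ∑ a, π' s a * ((r s a + γ * ∑ s', P s a s' * Vπ s') - Vπ s))
      = ∑ s, d s * δ s from rfl, hRHS]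
  field_simp
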